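/- (Theorem 1) In the IRS-aided wireless-powered MEC system where downlink WPT and uplink offloading may use two different IRS beamforming vectors, but all devices share a common offloading beamforming vector, TDMA offloading and NOMA offloading achieve the same optimal computation rate: R_TDMA^2 = R_NOMA^2. -/

import Mathlib

/-
Both problems share the harvesting phase (`v₀`, `τ₀`) and the local computing (`f`), so only the
offloading phase has to be compared, with the same `v₁`. A TDMA schedule is dominated by the NOMA
schedule that merges all slots into one of length `∑ τ_k`, each device spreading its offloading
energy `τ_k p_k` over it: by concavity of `x ↦ log (1 + x)` (Jensen) the rate does not decrease.
Conversely a NOMA slot of length `τ₁` splits into TDMA slots of lengths proportional to the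
received powers `p_k g_k`, device `k` transmitting at `∑_j p_j g_j / g_k`: every device spends the
same energy and every slot carries the NOMA sum-rate. So each feasible value of either problem is
bounded by a feasible value of the other, and the suprema agree.
-/

open Finset

/-- Effective channel power gain of device `k` under IRS beamforming vector `v`. -/
noncomputable def gain {K N : ℕ} (h : Fin K → ℂ) (q : Fin K → Fin N → ℂ)
    (k : Fin K) (v : Fin N → ℂ) : ℝ :=
  ‖(starRingEnd ℂ) (h k) + ∑ n, (starRingEnd ℂ) (q k n) * v n‖ ^ 2

/-- Optimal computation rate of TDMA offloading with separate IRS beamforming vectors for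
DL WPT and UL offloading (Case 2). -/
noncomputable def RTDMA2 {K N : ℕ} (h : Fin K → ℂ) (q : Fin K → Fin N → ℂ)
    (B T C γ η P σ2 : ℝ) : ℝ :=
  sSup {r : ℝ | ∃ (v₀ v₁ : Fin N → ℂ) (τ₀ : ℝ) (τ p f : Fin K → ℝ),
    (∀ n, ‖v₀ n‖ = 1) ∧ (∀ n, ‖v₁ n‖ = 1) ∧ 0 ≤ τ₀ ∧
    (∀ k, 0 ≤ τ k) ∧ (∀ k, 0 ≤ p k) ∧ (∀ k, 0 ≤ f k) ∧ τ₀ + ∑ k, τ k ≤ T ∧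
    (∀ k, τ k * p k + T * γ * f k ^ 3 ≤ τ₀ * η * P * gain h q k v₀) ∧
    r = B * ∑ k, τ k * Real.logb 2 (1 + p k * gain h q k v₁ / σ2) + ∑ k, T * f k / C}

/-- Optimal computation rate of NOMA offloading with separate IRS beamforming vectors for
DL WPT and UL offloading (Case 2). -/
noncomputable def RNOMA2 {K N : ℕ} (h : Fin K → ℂ) (q : Fin K → Fin N → ℂ)
    (B T C γ η P σ2 : ℝ) : ℝ :=
  sSup {r : ℝ | ∃ (v₀ v₁ : Fin N → ℂ) (τ₀ τ₁ : ℝ) (p f : Fin K → ℝ),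
    (∀ n, ‖v₀ n‖ = 1) ∧ (∀ n, ‖v₁ n‖ = 1) ∧ 0 ≤ τ₀ ∧ 0 ≤ τ₁ ∧
    (∀ k, 0 ≤ p k) ∧ (∀ k, 0 ≤ f k) ∧ τ₀ + τ₁ ≤ T ∧
    (∀ k, τ₁ * p k + T * γ * f k ^ 3 ≤ τ₀ * η * P * gain h q k v₀) ∧
    r = B * τ₁ * Real.logb 2 (1 + (∑ k, p k * gain h q k v₁) / σ2) + ∑ k, T * f k / C}

theorem ConcaveOn.sum_mul_le_sum_mul_map_div {ι : Type*} {s : Set ℝ} {φ : ℝ → ℝ}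
    (hφ : ConcaveOn ℝ s φ) {t : Finset ι} {τ x : ι → ℝ} (hτ : ∀ i ∈ t, 0 ≤ τ i)
    (hx : ∀ i ∈ t, x i ∈ s) :
    ∑ i ∈ t, τ i * φ (x i) ≤ (∑ i ∈ t, τ i) * φ ((∑ i ∈ t, τ i * x i) / ∑ i ∈ t, τ i) := by
  rcases (Finset.sum_nonneg hτ).eq_or_lt with hzero | hpos
  · have hτ_zero := (Finset.sum_eq_zero_iff_of_nonneg hτ).1 hzero.symm
    rw [← hzero, zero_mul, Finset.sum_eq_zero fun i hi => by rw [hτ_zero i hi, zero_mul]]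
  · have := hφ.le_map_centerMass hτ hpos hx
    simp only [Finset.centerMass, smul_eq_mul, inv_mul_eq_div] at this
    rwa [div_le_iff₀' hpos] at this

theorem concaveOn_logb_one_add_div {b c : ℝ} (hb : 1 < b) (hc : 0 < c) :
    ConcaveOn ℝ (Set.Ici 0) (fun x => Real.logb b (1 + x / c)) := by
  refine ⟨convex_Ici 0, fun x hx y hy α β hα hβ hαβ => ?_⟩
  have hpos : ∀ z ∈ Set.Ici (0 : ℝ), 1 + z / c ∈ Set.Ioi 0 := fun z hz =>
    Set.mem_Ioi.2 (by have := div_nonneg (Set.mem_Ici.1 hz) hc.le; linarith)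
  have hlog := strictConcaveOn_log_Ioi.concaveOn.2 (hpos x hx) (hpos y hy) hα hβ hαβ
  have harg : α • (1 + x / c) + β • (1 + y / c) = 1 + (α • x + β • y) / c := by
    simp only [smul_eq_mul]
    field_simp
    linear_combination c * hαβ
  rw [harg] at hlog
  simp only [smul_eq_mul, Real.logb] at hlog ⊢
  calc α * (Real.log (1 + x / c) / Real.log b) + β * (Real.log (1 + y / c) / Real.log b)
      = (α * Real.log (1 + x / c) + β * Real.log (1 + y / c)) / Real.log b := by ring
    _ ≤ Real.log (1 + (α * x + β * y) / c) / Real.log b :=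
      div_le_div_of_nonneg_right hlog (Real.log_pos hb).le

theorem mul_div_self_le {a b : ℝ} (ha : 0 ≤ a) : a * b / b ≤ a := by
  rw [mul_div_assoc]
  exact mul_le_of_le_one_right ha (div_self_le_one b)

section Schedules

variable {ι : Type*} [Fintype ι]

-- A zero denominator (no offloading time, zero gain) yields `0`, which keeps every schedule
-- feasible, so the lemmas below need no nondegeneracy hypotheses.

noncomputable def mergedPower (τ p : ι → ℝ) (k : ι) : ℝ := τ k * p k / ∑ j, τ j

noncomputable def splitTime (τ : ℝ) (p g : ι → ℝ) (k : ι) : ℝ := τ * (p k * g k) / ∑ j, p j * g j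

noncomputable def splitPower (p g : ι → ℝ) (k : ι) : ℝ := (∑ j, p j * g j) / g k

theorem mergedPower_nonneg {τ p : ι → ℝ} (hτ : ∀ k, 0 ≤ τ k) (hp : ∀ k, 0 ≤ p k) (k : ι) :
    0 ≤ mergedPower τ p k :=
  div_nonneg (mul_nonneg (hτ k) (hp k)) (Finset.sum_nonneg fun j _ => hτ j)

theorem splitTime_nonneg {τ : ℝ} {p g : ι → ℝ} (hτ : 0 ≤ τ) (hp : ∀ k, 0 ≤ p k)
    (hg : ∀ k, 0 ≤ g k) (k : ι) : 0 ≤ splitTime τ p g k :=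
  div_nonneg (mul_nonneg hτ (mul_nonneg (hp k) (hg k)))
    (Finset.sum_nonneg fun j _ => mul_nonneg (hp j) (hg j))

theorem splitPower_nonneg {p g : ι → ℝ} (hp : ∀ k, 0 ≤ p k) (hg : ∀ k, 0 ≤ g k) (k : ι) :
    0 ≤ splitPower p g k :=
  div_nonneg (Finset.sum_nonneg fun j _ => mul_nonneg (hp j) (hg j)) (hg k)

theorem sum_mul_mergedPower_le {τ p : ι → ℝ} {k : ι} (hτp : 0 ≤ τ k * p k) :
    (∑ j, τ j) * mergedPower τ p k ≤ τ k * p k :=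
  by rw [mergedPower, mul_div_assoc', mul_comm]; exact mul_div_self_le hτp

theorem sum_mul_logb_le_sum_mul_logb_mergedPower {b c : ℝ} (hb : 1 < b) (hc : 0 < c)
    {τ p g : ι → ℝ} (hτ : ∀ k, 0 ≤ τ k) (hpg : ∀ k, 0 ≤ p k * g k) :
    ∑ k, τ k * Real.logb b (1 + p k * g k / c)
      ≤ (∑ k, τ k) * Real.logb b (1 + (∑ k, mergedPower τ p k * g k) / c) := by
  have hmerge : ∑ k, mergedPower τ p k * g k = (∑ k, τ k * (p k * g k)) / ∑ k, τ k := by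
    rw [Finset.sum_div]
    exact Finset.sum_congr rfl fun k _ => by rw [mergedPower]; ring
  rw [hmerge]
  exact (concaveOn_logb_one_add_div hb hc).sum_mul_le_sum_mul_map_div
    (fun k _ => hτ k) (fun k _ => hpg k)

theorem sum_splitTime_le {τ : ℝ} (hτ : 0 ≤ τ) (p g : ι → ℝ) : ∑ k, splitTime τ p g k ≤ τ := by
  simp only [splitTime]
  rw [← Finset.sum_div, ← Finset.mul_sum]
  exact mul_div_self_le hτ

theorem splitTime_mul_splitPower_le {τ : ℝ} {p g : ι → ℝ} {k : ι} (hτp : 0 ≤ τ * p k) :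
    splitTime τ p g k * splitPower p g k ≤ τ * p k := by
  rcases eq_or_ne (g k) 0 with hg | hg
  · simpa [splitPower, hg] using hτp
  · calc splitTime τ p g k * splitPower p g k
        = τ * p k * (∑ j, p j * g j) / ∑ j, p j * g j := by
          simp only [splitTime, splitPower]
          field_simp
      _ ≤ τ * p k := mul_div_self_le hτp

theorem sum_splitTime_mul_map_splitPower (τ : ℝ) (p g : ι → ℝ) {φ : ℝ → ℝ} (hφ : φ 0 = 0) :
    ∑ k, splitTime τ p g k * φ (splitPower p g k * g k) = τ * φ (∑ j, p j * g j) := by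
  have hterm : ∀ k, splitTime τ p g k * φ (splitPower p g k * g k)
      = splitTime τ p g k * φ (∑ j, p j * g j) := fun k => by
    rcases eq_or_ne (g k) 0 with hg | hg
    · simp [splitTime, hg]
    · rw [splitPower, div_mul_cancel₀ _ hg]
  rw [Finset.sum_congr rfl fun k _ => hterm k, ← Finset.sum_mul]
  rcases eq_or_ne (∑ j, p j * g j) 0 with hS | hS
  · rw [hS, hφ, mul_zero, mul_zero]
  · simp only [splitTime]
    rw [← Finset.sum_div, ← Finset.mul_sum, mul_div_cancel_right₀ _ hS]

end Schedules

theorem RTDMA2_eq_RNOMA2_general {K N : ℕ}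
    (h : Fin K → ℂ) (q : Fin K → Fin N → ℂ) (B T C γ η P σ2 : ℝ)
    (hB : 0 < B) (hσ : 0 < σ2) :
    RTDMA2 h q B T C γ η P σ2 = RNOMA2 h q B T C γ η P σ2 := by
  have hgain : ∀ k v, 0 ≤ gain h q k v := fun _ _ => sq_nonneg _
  refine csSup_eq_csSup_of_forall_exists_le ?_ ?_
  · rintro _ ⟨v₀, v₁, τ₀, τ, p, f, hv₀, hv₁, hτ₀, hτ, hp, hf, htime, henergy, rfl⟩
    refine ⟨_, ⟨v₀, v₁, τ₀, ∑ k, τ k, mergedPower τ p, f, hv₀, hv₁, hτ₀,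
      Finset.sum_nonneg fun k _ => hτ k, mergedPower_nonneg hτ hp, hf, htime, fun k => ?_, rfl⟩,
      ?_⟩
    · exact (add_le_add_left (sum_mul_mergedPower_le (mul_nonneg (hτ k) (hp k))) _).trans
        (henergy k)
    · rw [mul_assoc]
      gcongr
      exact sum_mul_logb_le_sum_mul_logb_mergedPower one_lt_two hσ hτ
        fun k => mul_nonneg (hp k) (hgain k v₁)
  · rintro _ ⟨v₀, v₁, τ₀, τ₁, p, f, hv₀, hv₁, hτ₀, hτ₁, hp, hf, htime, henergy, rfl⟩
    refine ⟨_, ⟨v₀, v₁, τ₀, splitTime τ₁ p (gain h q · v₁), splitPower p (gain h q · v₁), f,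
      hv₀, hv₁, hτ₀, splitTime_nonneg hτ₁ hp (hgain · v₁), splitPower_nonneg hp (hgain · v₁), hf,
      ?_, fun k => ?_, rfl⟩, le_of_eq ?_⟩
    · linarith [sum_splitTime_le hτ₁ p (gain h q · v₁)]
    · exact (add_le_add_left (splitTime_mul_splitPower_le (mul_nonneg hτ₁ (hp k))) _).trans
        (henergy k)
    · rw [sum_splitTime_mul_map_splitPower τ₁ p (gain h q · v₁)
        (φ := fun x => Real.logb 2 (1 + x / σ2)) (by simp), mul_assoc]

/-- Theorem 1: `R_TDMA^{case2} = R_NOMA^{case2}`. -/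
theorem RTDMA2_eq_RNOMA2 {K N : ℕ} (hK : 1 ≤ K) (hN : 1 ≤ N)
    (h : Fin K → ℂ) (q : Fin K → Fin N → ℂ) (B T C γ η P σ2 : ℝ)
    (hB : 0 < B) (hT : 0 < T) (hC : 0 < C) (hγ : 0 < γ)
    (hη : 0 < η) (hP : 0 < P) (hσ : 0 < σ2) :
    RTDMA2 h q B T C γ η P σ2 = RNOMA2 h q B T C γ η P σ2 :=
  RTDMA2_eq_RNOMA2_general h q B T C γ η P σ2 hB hσ
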